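/- arXiv:2508.19930 — 3 statements merged into one kernel-verified Lean document; each statement's English description precedes it below -/
import Mathlib

section
/- Let A=((a,b),(c,d)) ∈ SL(2,ℂ) and let ω ∈ 𝕊²∖{N} with z = 𝒮(ω) such that cz+d ≠ 0. Then A·H(1,ω)·A* = ((|az+b|² + |cz+d|²)/(1+|z|²)) · H(1, τ_A(ω)), where A* denotes the conjugate transpose of A. -/
open MeasureTheory
open scoped Classical

noncomputable section

/-- Squared Euclidean norm on `ℝ²`. -/
def sq2 (x : ℝ × ℝ) : ℝ := x.1 ^ 2 + x.2 ^ 2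

/-- Euclidean dot product on `ℝ³`. -/
def dot3 (a b : Fin 3 → ℝ) : ℝ := a 0 * b 0 + a 1 * b 1 + a 2 * b 2

/-- Squared Euclidean norm on `ℝ³`. -/
def norm3sq (a : Fin 3 → ℝ) : ℝ := dot3 a a

/-- Stereographic projection from the north pole. -/
def SP (ω : Fin 3 → ℝ) : ℝ × ℝ := (ω 0 / (1 - ω 2), ω 1 / (1 - ω 2))

/-- Inverse stereographic projection. -/
def SPinv (x : ℝ × ℝ) : Fin 3 → ℝ :=
  ![2 * x.1 / (1 + sq2 x), 2 * x.2 / (1 + sq2 x), (sq2 x - 1) / (1 + sq2 x)]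

/-- Identification `ℝ² ≅ ℂ`. -/
def cx (x : ℝ × ℝ) : ℂ := ⟨x.1, x.2⟩

/-- Identification `ℂ ≅ ℝ²`. -/
def uncx (z : ℂ) : ℝ × ℝ := (z.re, z.im)

/-- The group `SL(2,ℂ)`. -/
abbrev SL2C := Matrix.SpecialLinearGroup (Fin 2) ℂ

/-- The Möbius transformation associated to `A ∈ SL(2,ℂ)`. -/
def TA (A : SL2C) (z : ℂ) : ℂ := (A.1 0 0 * z + A.1 0 1) / (A.1 1 0 * z + A.1 1 1)

/-- The north pole of `𝕊²`. -/
def northPole : Fin 3 → ℝ := ![0, 0, 1]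

/-- The conformal transformation of `𝕊²` induced by `A ∈ SL(2,ℂ)` via stereographic
projection, extended continuously over the poles. -/
def tauA (A : SL2C) (ω : Fin 3 → ℝ) : Fin 3 → ℝ :=
  if ω 2 = 1 then
    if A.1 1 0 = 0 then northPole else SPinv (uncx (A.1 0 0 / A.1 1 0))
  else if A.1 1 0 * cx (SP ω) + A.1 1 1 = 0 then northPole
  else SPinv (uncx (TA A (cx (SP ω))))

/-- The Jacobian `𝒥_{τ_A}(ω) = ((1+|z|²)/(|az+b|²+|cz+d|²))²`, `z = 𝒮(ω)`,
extended continuously over the north pole. -/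
def jacA (A : SL2C) (ω : Fin 3 → ℝ) : ℝ :=
  if ω 2 = 1 then (1 / (Complex.normSq (A.1 0 0) + Complex.normSq (A.1 1 0))) ^ 2
  else
    ((1 + Complex.normSq (cx (SP ω))) /
        (Complex.normSq (A.1 0 0 * cx (SP ω) + A.1 0 1) +
          Complex.normSq (A.1 1 0 * cx (SP ω) + A.1 1 1))) ^ 2

/-- `∫_{𝕊²} f dω = (1/π) ∫_{ℝ²} f(𝒮⁻¹(x)) (1+|x|²)⁻² dx`, the integral against the
normalized surface measure of `𝕊²`, written in stereographic coordinates. -/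
def sphInt {E : Type*} [NormedAddCommGroup E] [NormedSpace ℝ E]
    (f : (Fin 3 → ℝ) → E) : E :=
  (1 / Real.pi) • ∫ x : ℝ × ℝ, ((1 + sq2 x)⁻¹) ^ 2 • f (SPinv x)

/-- Integrability of `f : 𝕊² → ℝ` with respect to the normalized surface measure,
expressed in stereographic coordinates. -/
def SphIntegrable (f : (Fin 3 → ℝ) → ℝ) : Prop :=
  Integrable fun x : ℝ × ℝ => ((1 + sq2 x)⁻¹) ^ 2 * f (SPinv x)

/-- The mass `M_τ = ∫_{𝕊²} 𝒥_τ^{3/2} dω`. -/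
def massA (A : SL2C) : ℝ := sphInt fun ω => jacA A ω ^ (3 / 2 : ℝ)

/-- The center of mass `a_τ = M_τ⁻¹ ∫_{𝕊²} ω 𝒥_τ^{3/2}(ω) dω`. -/
def comA (A : SL2C) : Fin 3 → ℝ :=
  (massA A)⁻¹ • sphInt fun ω => jacA A ω ^ (3 / 2 : ℝ) • ω

/-- The normalizing constant `c_τ = -(1/2) ln M_τ`. -/
def cA (A : SL2C) : ℝ := -(1 / 2) * Real.log (massA A)

/-- `ψ_τ = (3/4) ln 𝒥_τ + c_τ`. -/
def psiA (A : SL2C) (ω : Fin 3 → ℝ) : ℝ := (3 / 4) * Real.log (jacA A ω) + cA A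

/-- `|∇v(x)|²` for `v : ℝ² → ℝ`. -/
def gradSq (v : ℝ × ℝ → ℝ) (x : ℝ × ℝ) : ℝ :=
  fderiv ℝ v x (1, 0) ^ 2 + fderiv ℝ v x (0, 1) ^ 2

/-- The Dirichlet energy `∫_{𝕊²} |∇_{𝕊²} u|² dω = (1/(4π)) ∫_{ℝ²} |∇(u∘𝒮⁻¹)(x)|² dx`. -/
def gradTerm (u : (Fin 3 → ℝ) → ℝ) : ℝ :=
  (1 / (4 * Real.pi)) * ∫ x : ℝ × ℝ, gradSq (fun y => u (SPinv y)) x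

/-- Membership in the Sobolev space `H¹(𝕊²)`. -/
def MemH1 (u : (Fin 3 → ℝ) → ℝ) : Prop :=
  SphIntegrable u ∧ SphIntegrable (fun ω => u ω ^ 2) ∧
    Integrable fun x : ℝ × ℝ => gradSq (fun y => u (SPinv y)) x

/-- The Chang–Gui functional `I_α`. -/
def CG (α : ℝ) (u : (Fin 3 → ℝ) → ℝ) : ℝ :=
  α * gradTerm u + 2 * sphInt u -
    (1 / 2) * Real.log
      ((sphInt fun ω => Real.exp (2 * u ω)) ^ 2 -
        norm3sq (sphInt fun ω => Real.exp (2 * u ω) • ω))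

end

/-- The linear bijection `H : ℝ^{1,3} → Herm(2,ℂ)`. -/
def Hmk (t : ℝ) (q : Fin 3 → ℝ) : Matrix (Fin 2) (Fin 2) ℂ :=
  !![((t + q 2 : ℝ) : ℂ), (q 0 : ℂ) + (q 1 : ℂ) * Complex.I;
     (q 0 : ℂ) - (q 1 : ℂ) * Complex.I, ((t - q 2 : ℝ) : ℂ)]

/-!
With `v = (z, 1)` the homogeneous coordinates of `z`, `H(1, 𝒮⁻¹ z) = 2/(1+|z|²) · v vᴴ`.
Conjugation by `A` turns `v vᴴ` into `(Av)(Av)ᴴ`, and `Av = (az+b, cz+d) = (cz+d) · (T_A z, 1)`,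
so `A H(1,ω) Aᴴ = 2|cz+d|²/(1+|z|²) · w wᴴ` with `w = (T_A z, 1)`. Since
`H(1, τ_A ω) = 2/(1+|T_A z|²) · w wᴴ`, the scalars match by
`|cz+d|² (1 + |T_A z|²) = |az+b|² + |cz+d|²`.
-/

section
open Matrix ComplexConjugate

lemma Matrix.mul_vecMulVec_star_mul_conjTranspose {m n α : Type*} [Fintype n]
    [NonUnitalSemiring α] [StarRing α] (A : Matrix m n α) (u : n → α) :
    A * vecMulVec u (star u) * Aᴴ = vecMulVec (A *ᵥ u) (star (A *ᵥ u)) := by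
  rw [mul_vecMulVec, vecMulVec_mul, vecMul_conjTranspose, star_star]

lemma vecMulVec_smul_star_smul {n : Type*} (c : ℂ) (u : n → ℂ) :
    vecMulVec (c • u) (star (c • u)) = Complex.normSq c • vecMulVec u (star u) := by
  ext i j
  simp only [vecMulVec_apply, Pi.smul_apply, Pi.star_apply, smul_eq_mul, star_mul',
    Matrix.smul_apply, Complex.real_smul, Complex.star_def, ← Complex.mul_conj]
  ring

lemma mulVec_vecCons_one_eq_smul_TA (A : SL2C) {z : ℂ} (hz : A.1 1 0 * z + A.1 1 1 ≠ 0) :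
    A.1 *ᵥ ![z, 1] = (A.1 1 0 * z + A.1 1 1) • ![TA A z, 1] := by
  ext i
  fin_cases i
  · simp [mulVec, dotProduct, Fin.sum_univ_two, TA, mul_div_cancel₀ _ hz]
  · simp [mulVec, dotProduct, Fin.sum_univ_two]

lemma SPinv_SP {ω : Fin 3 → ℝ} (hω : norm3sq ω = 1) (hN : ω 2 ≠ 1) : SPinv (SP ω) = ω := by
  have h : 1 - ω 2 ≠ 0 := sub_ne_zero.mpr hN.symm
  have hsq : ω 0 ^ 2 + ω 1 ^ 2 = (1 - ω 2) * (1 + ω 2) := by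
    simp only [norm3sq, dot3] at hω; linear_combination hω
  ext i
  fin_cases i <;>
    simp only [SPinv, SP, sq2, Fin.isValue, Fin.zero_eta, Fin.mk_one, Fin.reduceFinMk, cons_val,
      cons_val_zero, cons_val_one] <;> field_simp
  · linear_combination (-ω 0) * hsq
  · linear_combination (-ω 1) * hsq
  · linear_combination (1 - ω 2) * hsq

lemma sq2_uncx (z : ℂ) : sq2 (uncx z) = Complex.normSq z := by
  simp [sq2, uncx, Complex.normSq_apply, sq]

lemma vecMulVec_vecCons_one_star (z : ℂ) :
    vecMulVec ![z, 1] (star ![z, 1]) = !![(Complex.normSq z : ℂ), z; conj z, 1] := by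
  ext i j
  fin_cases i <;> fin_cases j <;> simp [vecMulVec_apply, Complex.mul_conj]

lemma Hmk_one_SPinv_uncx (z : ℂ) :
    Hmk 1 (SPinv (uncx z)) =
      (2 / (1 + Complex.normSq z) : ℝ) • vecMulVec ![z, 1] (star ![z, 1]) := by
  have h : (1 + Complex.normSq z : ℂ) ≠ 0 := by
    norm_cast; have := Complex.normSq_nonneg z; positivity
  rw [vecMulVec_vecCons_one_star]
  ext i j
  fin_cases i <;> fin_cases j <;>
    simp only [Hmk, SPinv, sq2_uncx, Fin.isValue, Fin.zero_eta, Fin.mk_one, cons_val, cons_val',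
      cons_val_zero, cons_val_one, cons_val_fin_one, of_apply, Matrix.smul_apply, Complex.real_smul,
      Complex.ofReal_add, Complex.ofReal_sub, Complex.ofReal_one, Complex.ofReal_div,
      Complex.ofReal_mul, Complex.ofReal_ofNat, mul_one] <;> field_simp
  · ring
  · exact Complex.re_add_im z
  · simp [Complex.ext_iff, uncx]
  · ring

end

/-- `A · H(1,ω) · A* = ((|az+b|² + |cz+d|²)/(1+|z|²)) · H(1, τ_A(ω))`. -/
theorem conjugation_identity (A : SL2C) (ω : Fin 3 → ℝ) (hω : norm3sq ω = 1)
    (hN : ω 2 ≠ 1) (hd : A.1 1 0 * cx (SP ω) + A.1 1 1 ≠ 0) :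
    A.1 * Hmk 1 ω * Matrix.conjTranspose A.1 =
      (((Complex.normSq (A.1 0 0 * cx (SP ω) + A.1 0 1) +
            Complex.normSq (A.1 1 0 * cx (SP ω) + A.1 1 1)) /
          (1 + Complex.normSq (cx (SP ω)))) : ℝ) • Hmk 1 (tauA A ω) := by
  have hτ : tauA A ω = SPinv (uncx (TA A (cx (SP ω)))) := by rw [tauA, if_neg hN, if_neg hd]
  have hH : Hmk 1 ω = Hmk 1 (SPinv (uncx (cx (SP ω)))) := by
    rw [show uncx (cx (SP ω)) = SP ω from rfl, SPinv_SP hω hN]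
  rw [hτ, hH, Hmk_one_SPinv_uncx, Hmk_one_SPinv_uncx, Matrix.mul_smul, Matrix.smul_mul,
    Matrix.mul_vecMulVec_star_mul_conjTranspose, mulVec_vecCons_one_eq_smul_TA A hd,
    vecMulVec_smul_star_smul, smul_smul, smul_smul]
  congr 1
  rw [TA, Complex.normSq_div]
  have hP := Complex.normSq_nonneg (A.1 0 0 * cx (SP ω) + A.1 0 1)
  have hQ : 0 < Complex.normSq (A.1 1 0 * cx (SP ω) + A.1 1 1) := Complex.normSq_pos.mpr hd
  have hZ := Complex.normSq_nonneg (cx (SP ω))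
  generalize Complex.normSq (A.1 0 0 * cx (SP ω) + A.1 0 1) = P at hP ⊢
  generalize Complex.normSq (A.1 1 0 * cx (SP ω) + A.1 1 1) = Q at hQ ⊢
  generalize Complex.normSq (cx (SP ω)) = Z at hZ ⊢
  field_simp
  ring
end

section
/- For every β ∈ ℝ², (1/π) ∫_{ℝ²} (1+|y−β|²)·(1+|y|²)^{−3} dy = 1 + |β|²/2. Consequently, if p=(p₁,p₂,p₃) ∈ 𝕊²∖{N} and β = 𝒮(p), the mass of the translation τ_p equals ∫_{𝕊²} 𝒥_{τ_p}(ω)^{3/2} dω = (1/2)·(3−p₃)/(1−p₃). -/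
open MeasureTheory
open scoped Classical

/-- Jacobian of the translation by `β` (given by `x ↦ x + β` in stereographic
coordinates). -/
noncomputable def jacTr (β : ℝ × ℝ) (ω : Fin 3 → ℝ) : ℝ :=
  ((1 + sq2 (SP ω)) / (1 + sq2 (SP ω + β))) ^ 2


/-!
In `1 + |y - β|² = (1 + |y|²) - 2⟨y, β⟩ + |β|²` the cross term is odd, so it disappears after
symmetrizing `y ↦ -y`, and the radial integrals `∫_{ℝ²} (1 + |y|²)^{-n} dy = π / (n - 1)` give
`π (1 + |β|² / 2)`. In stereographic coordinates the density of `𝒥_{τ_p}^{3/2} dω` is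
`(1 + |x|²) (1 + |x + β|²)^{-3} / π`, which the substitution `y = x + β` turns into the integrand
above; finally `|𝒮(p)|² = (1 + p₃) / (1 - p₃)` on the sphere.
-/

open Set Real Filter Topology

lemma sq2_nonneg (x : ℝ × ℝ) : 0 ≤ sq2 x := by
  unfold sq2; positivity

lemma one_add_sq2_pos (x : ℝ × ℝ) : 0 < 1 + sq2 x := by
  linarith [sq2_nonneg x]

@[fun_prop]
lemma continuous_sq2 : Continuous sq2 := by
  unfold sq2; fun_prop

lemma sq2_neg (x : ℝ × ℝ) : sq2 (-x) = sq2 x := by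
  simp [sq2]

lemma norm_sq_le_sq2 (y : ℝ × ℝ) : ‖y‖ ^ 2 ≤ sq2 y := by
  rw [Prod.norm_def]
  rcases max_cases ‖y.1‖ ‖y.2‖ with ⟨h, _⟩ | ⟨h, _⟩ <;> rw [h] <;>
    simp only [Real.norm_eq_abs, sq_abs, sq2] <;> nlinarith [sq_nonneg y.1, sq_nonneg y.2]

lemma one_add_sq2_sub_le (x y : ℝ × ℝ) : 1 + sq2 (x - y) ≤ 2 * (1 + sq2 x) * (1 + sq2 y) := by
  simp only [sq2, Prod.fst_sub, Prod.snd_sub]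
  nlinarith [sq_nonneg (x.1 + y.1), sq_nonneg (x.2 + y.2), mul_nonneg (sq2_nonneg x) (sq2_nonneg y)]

lemma sq2_polarCoord_symm (p : ℝ × ℝ) : sq2 (polarCoord.symm p) = p.1 ^ 2 := by
  rw [polarCoord_symm_apply, sq2]
  linear_combination p.1 ^ 2 * sin_sq_add_cos_sq p.2

theorem integral_comp_sq2_eq_integral_Ioi (g : ℝ → ℝ) :
    ∫ y : ℝ × ℝ, g (sq2 y) = 2 * π * ∫ r in Ioi (0 : ℝ), r * g (r ^ 2) := by
  rw [← integral_comp_polarCoord_symm, polarCoord_target, Measure.volume_eq_prod,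
    ← Measure.prod_restrict]
  simp only [sq2_polarCoord_symm, smul_eq_mul]
  have hprod := integral_prod_mul (μ := volume.restrict (Ioi (0 : ℝ)))
    (ν := volume.restrict (Ioo (-π) π)) (fun r : ℝ => r * g (r ^ 2)) (fun _ : ℝ => (1 : ℝ))
  simp only [mul_one] at hprod
  rw [hprod, integral_const, smul_eq_mul, mul_one, measureReal_restrict_apply_univ,
    Real.volume_real_Ioo_of_le (by linarith [pi_pos])]
  ring

lemma integral_Ioi_mul_inv_one_add_sq_pow (m : ℕ) :
    ∫ r in Ioi (0 : ℝ), r * ((1 + r ^ 2) ^ (m + 2))⁻¹ = (2 * ((m : ℝ) + 1))⁻¹ := by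
  have hderiv : ∀ r ∈ Ici (0 : ℝ), HasDerivAt (fun r : ℝ => -(2 * (m + 1) * (1 + r ^ 2) ^ (m + 1))⁻¹)
      (r * ((1 + r ^ 2) ^ (m + 2))⁻¹) r := by
    intro r _
    refine (((((hasDerivAt_pow 2 r).const_add 1).fun_pow (m + 1)).const_mul
      (2 * ((m : ℝ) + 1))).fun_inv (by positivity)).fun_neg.congr_deriv ?_
    simp only [add_tsub_cancel_right, Nat.cast_ofNat, Nat.cast_add, Nat.cast_one]
    field_simp
    ring
  have htend : Tendsto (fun r : ℝ => -(2 * (m + 1) * (1 + r ^ 2) ^ (m + 1))⁻¹) atTop (𝓝 0) := by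
    rw [← neg_zero]
    refine (Tendsto.inv_tendsto_atTop (Tendsto.const_mul_atTop (by positivity) ?_)).neg
    exact (tendsto_pow_atTop m.succ_ne_zero).comp
      (tendsto_atTop_add_const_left _ _ (tendsto_pow_atTop two_ne_zero))
  rw [integral_Ioi_of_hasDerivAt_of_nonneg' hderiv (fun r (hr : 0 < r) => by positivity) htend]
  simp

theorem integral_inv_one_add_sq2_pow (m : ℕ) :
    ∫ y : ℝ × ℝ, ((1 + sq2 y) ^ (m + 2))⁻¹ = π / (m + 1) := by
  rw [integral_comp_sq2_eq_integral_Ioi (fun t => ((1 + t) ^ (m + 2))⁻¹), integral_Ioi_mul_inv_one_add_sq_pow]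
  field_simp

theorem integrable_inv_one_add_sq2_pow (m : ℕ) :
    Integrable fun y : ℝ × ℝ => ((1 + sq2 y) ^ (m + 2))⁻¹ := by
  refine (integrable_rpow_neg_one_add_norm_sq (E := ℝ × ℝ) (r := 4) (by simp; norm_num)).mono'
    (Continuous.aestronglyMeasurable
      (by fun_prop (disch := exact fun y => (pow_pos (one_add_sq2_pos y) _).ne')))
    (Eventually.of_forall fun y => ?_)
  have h1 : 1 ≤ 1 + sq2 y := by linarith [sq2_nonneg y]
  rw [norm_inv, norm_pow, Real.norm_of_nonneg (one_add_sq2_pos y).le,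
    show (-4 / 2 : ℝ) = -(2 : ℕ) by norm_num, Real.rpow_neg (by positivity), Real.rpow_natCast]
  calc ((1 + sq2 y) ^ (m + 2))⁻¹ ≤ ((1 + sq2 y) ^ 2)⁻¹ :=
        inv_anti₀ (by positivity) (pow_le_pow_right₀ h1 (by omega))
    _ ≤ ((1 + ‖y‖ ^ 2) ^ 2)⁻¹ := by gcongr; exact norm_sq_le_sq2 y

theorem integral_one_add_sq2_sub_mul_inv_pow_three (β : ℝ × ℝ) :
    ∫ y : ℝ × ℝ, (1 + sq2 (y - β)) * ((1 + sq2 y)⁻¹) ^ 3 = π * (1 + sq2 β / 2) := by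
  set F : ℝ × ℝ → ℝ := fun y => (1 + sq2 (y - β)) * ((1 + sq2 y)⁻¹) ^ 3
  have hF : Integrable F := by
    refine ((integrable_inv_one_add_sq2_pow 0).const_mul (2 * (1 + sq2 β))).mono'
      (Continuous.aestronglyMeasurable
        (by simp only [F]; fun_prop (disch := exact fun y => (one_add_sq2_pos y).ne')))
      (Eventually.of_forall fun y => ?_)
    have hy := one_add_sq2_pos y
    rw [Real.norm_of_nonneg (by simp only [F]; have := sq2_nonneg (y - β); positivity)]
    calc F y = (1 + sq2 (y - β)) / (1 + sq2 y) * ((1 + sq2 y) ^ 2)⁻¹ := by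
          simp only [F]; field_simp
      _ ≤ 2 * (1 + sq2 β) * ((1 + sq2 y) ^ (0 + 2))⁻¹ := by
          gcongr
          rw [div_le_iff₀ hy]
          linarith [one_add_sq2_sub_le y β]
  have hsymm : ∀ y, F y + F (-y) = 2 * (((1 + sq2 y) ^ 2)⁻¹ + sq2 β * ((1 + sq2 y) ^ 3)⁻¹) := by
    intro y
    have hy := (one_add_sq2_pos y).ne'
    simp only [F, sq2_neg]
    simp only [sq2, Prod.fst_sub, Prod.snd_sub, Prod.fst_neg, Prod.snd_neg] at hy ⊢
    field_simp
    ring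
  calc ∫ y, F y = ((∫ y, F y) + ∫ y, F (-y)) / 2 := by rw [integral_neg_eq_self]; ring
    _ = (∫ y, 2 * (((1 + sq2 y) ^ 2)⁻¹ + sq2 β * ((1 + sq2 y) ^ 3)⁻¹)) / 2 := by
        rw [← integral_add hF hF.comp_neg]; simp_rw [hsymm]
    _ = π * (1 + sq2 β / 2) := by
        rw [integral_const_mul, integral_add (integrable_inv_one_add_sq2_pow 0)
          ((integrable_inv_one_add_sq2_pow 1).const_mul _), integral_const_mul,
          integral_inv_one_add_sq2_pow 0, integral_inv_one_add_sq2_pow 1]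
        ring

lemma SP_SPinv (x : ℝ × ℝ) : SP (SPinv x) = x := by
  have hne := (one_add_sq2_pos x).ne'
  have h2 : 1 - (sq2 x - 1) / (1 + sq2 x) = 2 / (1 + sq2 x) := by field_simp; ring
  simp only [SP, SPinv, Matrix.cons_val_zero, Matrix.cons_val_one, Matrix.cons_val_two,
    Matrix.head_cons, Matrix.tail_cons, h2]
  ext <;> field_simp

lemma sq2_SP_of_norm3sq_eq_one {p : Fin 3 → ℝ} (hp : norm3sq p = 1) (hp3 : p 2 ≠ 1) :
    sq2 (SP p) = (1 + p 2) / (1 - p 2) := by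
  have h1 : 1 - p 2 ≠ 0 := sub_ne_zero.mpr hp3.symm
  simp only [norm3sq, dot3] at hp
  simp only [sq2, SP, div_pow]
  field_simp
  linear_combination hp

lemma jacTr_SPinv_rpow_three_halves (β x : ℝ × ℝ) :
    jacTr β (SPinv x) ^ (3 / 2 : ℝ) = ((1 + sq2 x) / (1 + sq2 (x + β))) ^ 3 := by
  have hq : 0 ≤ (1 + sq2 x) / (1 + sq2 (x + β)) :=
    div_nonneg (one_add_sq2_pos x).le (one_add_sq2_pos _).le
  rw [jacTr, SP_SPinv, ← Real.rpow_natCast_mul hq]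
  norm_num

theorem sphInt_jacTr_rpow_three_halves (β : ℝ × ℝ) :
    sphInt (fun ω => jacTr β ω ^ (3 / 2 : ℝ)) = 1 + sq2 β / 2 := by
  have hdensity : ∀ x : ℝ × ℝ, ((1 + sq2 x)⁻¹) ^ 2 • jacTr β (SPinv x) ^ (3 / 2 : ℝ)
      = (1 + sq2 (x + β - β)) * ((1 + sq2 (x + β))⁻¹) ^ 3 := by
    intro x
    have := (one_add_sq2_pos x).ne'
    rw [jacTr_SPinv_rpow_three_halves, add_sub_cancel_right, smul_eq_mul]
    field_simp
  rw [sphInt, funext hdensity,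
    integral_add_right_eq_self (fun y => (1 + sq2 (y - β)) * ((1 + sq2 y)⁻¹) ^ 3) β,
    integral_one_add_sq2_sub_mul_inv_pow_three, smul_eq_mul]
  field_simp [pi_pos.ne']

/-- `(1/π)∫_{ℝ²}(1+|y−β|²)(1+|y|²)⁻³ dy = 1 + |β|²/2`; consequently the
mass of the translation `τ_p` equals `(1/2)(3−p₃)/(1−p₃)`. -/
theorem mass_translation :
    (∀ β : ℝ × ℝ,
      (1 / Real.pi) * ∫ y : ℝ × ℝ, (1 + sq2 (y - β)) * ((1 + sq2 y)⁻¹) ^ 3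
        = 1 + sq2 β / 2) ∧
    ∀ p : Fin 3 → ℝ, norm3sq p = 1 → p 2 ≠ 1 →
      sphInt (fun ω => jacTr (SP p) ω ^ (3 / 2 : ℝ))
        = (1 / 2) * ((3 - p 2) / (1 - p 2)) := by
  refine ⟨fun β => ?_, fun p hp hp3 => ?_⟩
  · rw [integral_one_add_sq2_sub_mul_inv_pow_three]
    field_simp [pi_pos.ne']
  · have h1 : 1 - p 2 ≠ 0 := sub_ne_zero.mpr hp3.symm
    rw [sphInt_jacTr_rpow_three_halves, sq2_SP_of_norm3sq_eq_one hp hp3]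
    field_simp
    ring
end

section
/- Let p=(p₁,p₂,p₃) ∈ 𝕊² with p₃ ≠ 1, set a = (1/(3−p₃))·(−2p₁, −2p₂, 1+p₃) ∈ ℝ³ and β = 𝒮(p) ∈ ℝ². Then for every ω ∈ 𝕊²∖{N} with x = 𝒮(ω), one has 1 − a·ω = 2(1+|x+β|²)/((2+|β|²)(1+|x|²)), where a·ω is the Euclidean inner product in ℝ³. -/
open MeasureTheory
open scoped Classical

/-! On the sphere, `|𝒮(ω)|² = (1 + ω₃)/(1 − ω₃)`, so `1 + |x|² = 2/(1 − ω₃)` and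
`2 + |β|² = (3 − p₃)/(1 − p₃)`. Expanding `|x + β|² = |x|² + |β|² + 2 x·β` with
`x·β = (ω₁p₁ + ω₂p₂)/((1 − ω₃)(1 − p₃))`, the denominators `1 − ω₃`, `1 − p₃` cancel and both
sides become `(3 − p₃ − (1 + p₃)ω₃ + 2(ω₁p₁ + ω₂p₂))/(3 − p₃)`. -/

lemma sq2_add (x y : ℝ × ℝ) :
    sq2 (x + y) = sq2 x + sq2 y + 2 * (x.1 * y.1 + x.2 * y.2) := by
  simp only [sq2, Prod.fst_add, Prod.snd_add]
  ring

lemma dot3_smul_left (c : ℝ) (a b : Fin 3 → ℝ) : dot3 (c • a) b = c * dot3 a b := by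
  simp only [dot3, Pi.smul_apply, smul_eq_mul]
  ring

lemma apply_two_le_one_of_norm3sq_eq_one {ω : Fin 3 → ℝ} (hω : norm3sq ω = 1) : ω 2 ≤ 1 := by
  unfold norm3sq dot3 at hω
  nlinarith [sq_nonneg (ω 0), sq_nonneg (ω 1), sq_nonneg (ω 2 - 1)]

lemma sq2_SP {ω : Fin 3 → ℝ} (hω : norm3sq ω = 1) (hωN : ω 2 ≠ 1) :
    sq2 (SP ω) = (1 + ω 2) / (1 - ω 2) := by
  have h : 1 - ω 2 ≠ 0 := sub_ne_zero.mpr hωN.symm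
  unfold norm3sq dot3 at hω
  unfold sq2 SP
  field_simp
  linear_combination hω

lemma one_add_sq2_SP {ω : Fin 3 → ℝ} (hω : norm3sq ω = 1) (hωN : ω 2 ≠ 1) :
    1 + sq2 (SP ω) = 2 / (1 - ω 2) := by
  have h : 1 - ω 2 ≠ 0 := sub_ne_zero.mpr hωN.symm
  rw [sq2_SP hω hωN]
  field_simp
  ring

lemma two_add_sq2_SP {ω : Fin 3 → ℝ} (hω : norm3sq ω = 1) (hωN : ω 2 ≠ 1) :
    2 + sq2 (SP ω) = (3 - ω 2) / (1 - ω 2) := by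
  have h : 1 - ω 2 ≠ 0 := sub_ne_zero.mpr hωN.symm
  rw [sq2_SP hω hωN]
  field_simp
  ring

lemma SP_fst_mul_add_snd_mul (ω p : Fin 3 → ℝ) :
    (SP ω).1 * (SP p).1 + (SP ω).2 * (SP p).2
      = (ω 0 * p 0 + ω 1 * p 1) / ((1 - ω 2) * (1 - p 2)) := by
  simp only [SP, div_mul_div_comm, add_div]

/-- with `a = (1/(3−p₃))(−2p₁,−2p₂,1+p₃)`, `β = 𝒮(p)`, `x = 𝒮(ω)`, one has
`1 − a·ω = 2(1+|x+β|²)/((2+|β|²)(1+|x|²))`. -/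
theorem one_sub_dot_identity (p : Fin 3 → ℝ) (hp : norm3sq p = 1) (hpN : p 2 ≠ 1)
    (ω : Fin 3 → ℝ) (hω : norm3sq ω = 1) (hωN : ω 2 ≠ 1) :
    1 - dot3 ((3 - p 2)⁻¹ • ![-2 * p 0, -2 * p 1, 1 + p 2]) ω
      = 2 * (1 + sq2 (SP ω + SP p)) / ((2 + sq2 (SP p)) * (1 + sq2 (SP ω))) := by
  have hp1 : 1 - p 2 ≠ 0 := sub_ne_zero.mpr hpN.symm
  have hω1 : 1 - ω 2 ≠ 0 := sub_ne_zero.mpr hωN.symm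
  have hp3 : 3 - p 2 ≠ 0 := by linarith [apply_two_le_one_of_norm3sq_eq_one hp]
  rw [two_add_sq2_SP hp hpN, one_add_sq2_SP hω hωN, sq2_add, SP_fst_mul_add_snd_mul, sq2_SP hω hωN,
    sq2_SP hp hpN, dot3_smul_left]
  simp only [dot3, Matrix.cons_val_zero, Matrix.cons_val_one, Matrix.cons_val_two, Matrix.tail_cons,
    Matrix.head_cons]
  field_simp
  ring
end
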